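/- Let G be a triangle-free graph with at least three edges. For any three edges e₁, e₂, e₃ of G, the graph M(G) − u − {e₁, e₂, e₃} contains a subgraph isomorphic to G. -/

import Mathlib

variable {V : Type*}

/-- An orientation of a simple graph `G`: each edge gets exactly one direction. -/
structure Orient (G : SimpleGraph V) where
  dir : V → V → Prop
  dir_adj : ∀ u v, dir u v → G.Adj u v
  adj_dir : ∀ u v, G.Adj u v → dir u v ∨ dir v u
  asymm : ∀ u v, dir u v → ¬ dir v u

/-- The relation obtained from `dir` by reversing the single arc `u → v`. -/
def reverseArc (dir : V → V → Prop) (u v : V) : V → V → Prop :=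
  fun a b => (dir a b ∧ ¬(a = u ∧ b = v)) ∨ (a = v ∧ b = u)

/-- A relation is acyclic if there is no directed cycle. -/
def IsAcyclicRel (dir : V → V → Prop) : Prop :=
  ∀ u v, dir u v → ¬ Relation.ReflTransGen dir v u

/-- An arc `u → v` is dependent if its reversal creates a directed cycle. -/
def DependentArc (dir : V → V → Prop) (u v : V) : Prop :=
  dir u v ∧ ¬ IsAcyclicRel (reverseArc dir u v)

/-- A cover graph admits an acyclic orientation with no dependent arcs. -/
def IsCoverGraph (G : SimpleGraph V) : Prop :=
  ∃ D : Orient G, IsAcyclicRel D.dir ∧ ∀ u v, ¬ DependentArc D.dir u v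

/-- The number of dependent arcs of an orientation. -/
noncomputable def numDependent {G : SimpleGraph V} (D : Orient G) : ℕ :=
  Set.ncard {p : V × V | DependentArc D.dir p.1 p.2}

/-- `d_min`: minimum number of dependent arcs over all acyclic orientations. -/
noncomputable def dmin (G : SimpleGraph V) : ℕ :=
  sInf {n | ∃ D : Orient G, IsAcyclicRel D.dir ∧ numDependent D = n}

/-- `d_max`: maximum number of dependent arcs over all acyclic orientations. -/
noncomputable def dmax (G : SimpleGraph V) : ℕ :=
  sSup {n | ∃ D : Orient G, IsAcyclicRel D.dir ∧ numDependent D = n}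

/-- `c(G)`: minimum number of edges to delete from `G` to get a cover graph. -/
noncomputable def coverDeletion (G : SimpleGraph V) : ℕ :=
  sInf {n | ∃ F : Set (Sym2 V), F ⊆ G.edgeSet ∧ IsCoverGraph (G.deleteEdges F) ∧ F.ncard = n}

/-- The generalized Mycielski graph `M_m(G)`; `none` is the apex `u`,
`some (i, a)` is the vertex `⟨i, a⟩`. -/
def genMycielski (G : SimpleGraph V) (m : ℕ) : SimpleGraph (Option (Fin (m + 1) × V)) where
  Adj x y :=
    match x, y with
    | some (i, a), some (j, b) =>
        G.Adj a b ∧ ((i = j ∧ (i : ℕ) = 0) ∨ (i : ℕ) + 1 = (j : ℕ) ∨ (j : ℕ) + 1 = (i : ℕ))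
    | some (i, _), none => (i : ℕ) = m
    | none, some (j, _) => (j : ℕ) = m
    | none, none => False
  symm := by
    constructor
    rintro (_ | ⟨i, a⟩) (_ | ⟨j, b⟩) h
    · exact h
    · exact h
    · exact h
    · refine ⟨h.1.symm, ?_⟩
      rcases h.2 with ⟨h1, h2⟩ | h' | h'
      · exact Or.inl ⟨h1.symm, h1 ▸ h2⟩
      · exact Or.inr (Or.inr h')
      · exact Or.inr (Or.inl h')
  loopless := by
    constructor
    rintro (_ | ⟨i, a⟩) h <;> simp_all

/-- The Mycielskian `M(G)` with the apex vertex `u` deleted. -/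
def MyDelU (G : SimpleGraph V) : SimpleGraph {x : Option (Fin 2 × V) // x ≠ none} :=
  SimpleGraph.comap Subtype.val (genMycielski G 1)

/-- The copy of a vertex of `G` at level `0` inside `M(G) - u`. -/
def lvl0 (a : V) : {x : Option (Fin 2 × V) // x ≠ none} :=
  ⟨some (0, a), Option.some_ne_none _⟩

/-!
Triangle-freeness lets one pick an endpoint of each of `e₁, e₂, e₃` so that the three chosen
vertices are pairwise non-adjacent; call this independent set `S`. Send `v` to `⟨1, v⟩` if
`v ∈ S` and to `⟨0, v⟩` otherwise. An edge of `G` has at most one end in `S`, so it goes either to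
an edge `⟨1, v⟩⟨0, w⟩` of `M(G) - u` or to a level-`0` edge `⟨0, v⟩⟨0, w⟩` with `v, w ∉ S`, which
is none of the deleted edges because each `eᵢ` has an end in `S`.
-/

namespace SimpleGraph

variable {G : SimpleGraph V}

theorem CliqueFree.not_adj_of_adj_of_adj (htf : G.CliqueFree 3) {a b c : V}
    (hab : G.Adj a b) (hac : G.Adj a c) : ¬G.Adj b c := by
  classical
  exact fun hbc => htf {a, b, c} (is3Clique_triple_iff.mpr ⟨hab, hac, hbc⟩)

theorem CliqueFree.exists_endpoint_not_adj (htf : G.CliqueFree 3) {c d : V}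
    (hcd : G.Adj c d) (v : V) : ∃ y y', s(y, y') = s(c, d) ∧ G.Adj y y' ∧ ¬G.Adj v y := by
  by_cases hvc : G.Adj v c
  · exact ⟨d, c, Sym2.eq_swap, hcd.symm, htf.not_adj_of_adj_of_adj hvc.symm hcd⟩
  · exact ⟨c, d, rfl, hcd, hvc⟩

/-- Try `a` with endpoints `y`, `z` of the other edges not adjacent to `a`. If `y ~ z`, swapping
`y` or `z` for the other endpoint `y'` or `z'` works unless `a ~ y'` and `a ~ z'`; then `b`, `y'`, `z'`
are all neighbours of `a`, hence pairwise non-adjacent. -/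
theorem CliqueFree.exists_transversal_not_adj (htf : G.CliqueFree 3) {a b c d e f : V}
    (hab : G.Adj a b) (hcd : G.Adj c d) (hef : G.Adj e f) :
    ∃ x ∈ s(a, b), ∃ y ∈ s(c, d), ∃ z ∈ s(e, f),
      ¬G.Adj x y ∧ ¬G.Adj x z ∧ ¬G.Adj y z := by
  obtain ⟨y, y', hy, hyy', hay⟩ := htf.exists_endpoint_not_adj hcd a
  obtain ⟨z, z', hz, hzz', haz⟩ := htf.exists_endpoint_not_adj hef a
  rw [← hy, ← hz]
  by_cases hyz : G.Adj y z
  swap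
  · exact ⟨a, Sym2.mem_mk_left _ _, y, Sym2.mem_mk_left _ _, z, Sym2.mem_mk_left _ _, hay, haz, hyz⟩
  by_cases hay' : G.Adj a y'
  swap
  · exact ⟨a, Sym2.mem_mk_left _ _, y', Sym2.mem_mk_right _ _, z, Sym2.mem_mk_left _ _, hay', haz,
      htf.not_adj_of_adj_of_adj hyy' hyz⟩
  by_cases haz' : G.Adj a z'
  swap
  · exact ⟨a, Sym2.mem_mk_left _ _, y, Sym2.mem_mk_left _ _, z', Sym2.mem_mk_right _ _, hay, haz',
      fun hyz' => htf.not_adj_of_adj_of_adj hzz' hyz.symm hyz'.symm⟩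
  exact ⟨b, Sym2.mem_mk_right _ _, y', Sym2.mem_mk_right _ _, z', Sym2.mem_mk_right _ _,
    htf.not_adj_of_adj_of_adj hab hay', htf.not_adj_of_adj_of_adj hab haz',
    htf.not_adj_of_adj_of_adj hay' haz'⟩

theorem CliqueFree.exists_isIndepSet_meets_three_edges (htf : G.CliqueFree 3) {e₁ e₂ e₃ : Sym2 V}
    (he₁ : e₁ ∈ G.edgeSet) (he₂ : e₂ ∈ G.edgeSet) (he₃ : e₃ ∈ G.edgeSet) :
    ∃ S : Set V, G.IsIndepSet S ∧ ∀ e ∈ ({e₁, e₂, e₃} : Set (Sym2 V)), ∃ v ∈ S, v ∈ e := by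
  induction e₁ using Sym2.ind
  induction e₂ using Sym2.ind
  induction e₃ using Sym2.ind
  obtain ⟨x, hx, y, hy, z, hz, hxy, hxz, hyz⟩ := htf.exists_transversal_not_adj he₁ he₂ he₃
  refine ⟨{x, y, z}, ?_, ?_⟩
  · simp only [isIndepSet_iff, Set.pairwise_insert, Set.pairwise_singleton, Set.mem_insert_iff,
      Set.mem_singleton_iff]
    grind [Adj.symm]
  · rintro e (rfl | rfl | rfl)
    exacts [⟨x, by simp, hx⟩, ⟨y, by simp, hy⟩, ⟨z, by simp, hz⟩]

end SimpleGraph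

open Classical in
noncomputable def liftOn (S : Set V) (v : V) : {x : Option (Fin 2 × V) // x ≠ none} :=
  ⟨some (if v ∈ S then 1 else 0, v), Option.some_ne_none _⟩

theorem liftOn_injective (S : Set V) : Function.Injective (liftOn S) := by
  intro v w h
  simpa [liftOn] using congrArg (fun x => x.val.map Prod.snd) h

theorem lvl0_ne_liftOn_of_mem {S : Set V} {v : V} (hv : v ∈ S) (w : V) :
    lvl0 v ≠ liftOn S w := by
  intro h
  have hwv : w = v := by simpa [liftOn, lvl0] using congrArg (fun x => x.val.map Prod.snd) h.symm
  subst hwv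
  simp [liftOn, lvl0, hv] at h

theorem myDelU_adj_liftOn {G : SimpleGraph V} {S : Set V} (hS : G.IsIndepSet S) {v w : V}
    (h : G.Adj v w) : (MyDelU G).Adj (liftOn S v) (liftOn S w) := by
  refine ⟨h, ?_⟩
  by_cases hv : v ∈ S <;> by_cases hw : w ∈ S
  · exact absurd h (hS hv hw (G.ne_of_adj h))
  all_goals simp [hv, hw]

/-- Only edges with both ends outside `S` stay at level `0`, and these are not in `F`. -/
theorem deleteEdges_adj_liftOn {G : SimpleGraph V} {S : Set V} {F : Set (Sym2 V)}
    (hS : G.IsIndepSet S) (hF : ∀ e ∈ F, ∃ v ∈ S, v ∈ e) {v w : V} (h : G.Adj v w) :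
    ((MyDelU G).deleteEdges (Sym2.map lvl0 '' F)).Adj (liftOn S v) (liftOn S w) := by
  rw [SimpleGraph.deleteEdges_adj]
  refine ⟨myDelU_adj_liftOn hS h, ?_⟩
  rintro ⟨e, he, hmap⟩
  obtain ⟨x, hxS, hxe⟩ := hF e he
  have hx : lvl0 x ∈ s(liftOn S v, liftOn S w) := hmap ▸ Sym2.mem_map.mpr ⟨x, hxe, rfl⟩
  rcases Sym2.mem_iff.mp hx with hxv | hxw
  · exact lvl0_ne_liftOn_of_mem hxS v hxv
  · exact lvl0_ne_liftOn_of_mem hxS w hxw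

theorem subgraph_after_three_edge_deletion_general (G : SimpleGraph V)
    (htf : G.CliqueFree 3)
    (e₁ e₂ e₃ : Sym2 V)
    (he₁ : e₁ ∈ G.edgeSet) (he₂ : e₂ ∈ G.edgeSet) (he₃ : e₃ ∈ G.edgeSet) :
    ∃ f : G →g (MyDelU G).deleteEdges
        {Sym2.map lvl0 e₁, Sym2.map lvl0 e₂, Sym2.map lvl0 e₃},
      Function.Injective f := by
  obtain ⟨S, hS, hF⟩ := htf.exists_isIndepSet_meets_three_edges he₁ he₂ he₃
  refine ⟨⟨liftOn S, fun h => ?_⟩, liftOn_injective S⟩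
  simpa only [Set.image_insert_eq, Set.image_singleton] using deleteEdges_adj_liftOn hS hF h

theorem subgraph_after_three_edge_deletion (G : SimpleGraph V)
    (htf : G.CliqueFree 3) (h3 : 3 ≤ G.edgeSet.ncard)
    (e₁ e₂ e₃ : Sym2 V)
    (he₁ : e₁ ∈ G.edgeSet) (he₂ : e₂ ∈ G.edgeSet) (he₃ : e₃ ∈ G.edgeSet)
    (h12 : e₁ ≠ e₂) (h13 : e₁ ≠ e₃) (h23 : e₂ ≠ e₃) :
    ∃ f : G →g (MyDelU G).deleteEdges
        {Sym2.map lvl0 e₁, Sym2.map lvl0 e₂, Sym2.map lvl0 e₃},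
      Function.Injective f :=
  subgraph_after_three_edge_deletion_general G htf e₁ e₂ e₃ he₁ he₂ he₃
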